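/- In a median graph G with a fixed basepoint v₀, for every vertex m, the maximum distance Υ(m) = max{ d(u,v) : u,v ∈ V, m = m(u,v,v₀) } satisfies Υ(m) = max{ φ(m,L) + φ(m,L*) : L, L* POFs outgoing from m with L ∩ L* = ∅ }, and consequently diam(G) = max over all vertices m of max{ φ(m,L) + φ(m,L*) : L, L* POFs outgoing from m with L ∩ L* = ∅ }. -/

import Mathlib

namespace MedianPaper

variable {V : Type*}

/-- The metric interval `I(u,v)`: vertices on shortest `(u,v)`-paths. -/
def interval (G : SimpleGraph V) (u v : V) : Set V :=
  {w | G.dist u w + G.dist w v = G.dist u v}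

/-- A median graph: a connected graph in which every triple of vertices
has a unique median. -/
def MedianGraph (G : SimpleGraph V) : Prop :=
  G.Connected ∧ ∀ x y z : V, ∃! m : V,
    m ∈ interval G x y ∧ m ∈ interval G y z ∧ m ∈ interval G z x

/-- `u v x y` span a 4-cycle `u-v-y-x-u`, with opposite edge pairs
`(uv, xy)` and `(ux, vy)`. -/
def IsSquare (G : SimpleGraph V) (u v x y : V) : Prop :=
  G.Adj u v ∧ G.Adj x y ∧ G.Adj u x ∧ G.Adj v y ∧ u ≠ y ∧ v ≠ x

/-- Two edges are in relation Θ₀ if they are opposite edges of a common 4-cycle. -/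
def Theta0 (G : SimpleGraph V) (e f : Sym2 V) : Prop :=
  ∃ u v x y : V, IsSquare G u v x y ∧ e = s(u, v) ∧ f = s(x, y)

/-- Θ : the reflexive-transitive closure of Θ₀ on the edges of `G`. -/
def Theta (G : SimpleGraph V) (e f : Sym2 V) : Prop :=
  e ∈ G.edgeSet ∧ f ∈ G.edgeSet ∧ Relation.ReflTransGen (Theta0 G) e f

/-- The Θ-classes of `G`: equivalence classes of edges under Θ. -/
def ThetaClass (G : SimpleGraph V) (C : Set (Sym2 V)) : Prop :=
  ∃ e ∈ G.edgeSet, C = {f | Theta G e f}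

/-- The edge set `C` separates `u` from `v` : they lie in different
components of `G` minus `C`. -/
def Separates (G : SimpleGraph V) (C : Set (Sym2 V)) (u v : V) : Prop :=
  ¬ (G.deleteEdges C).Reachable u v

/-- The signature `σ_{u,v}`: Θ-classes separating `u` from `v`. -/
def signature (G : SimpleGraph V) (u v : V) : Set (Set (Sym2 V)) :=
  {C | ThetaClass G C ∧ Separates G C u v}

/-- `H`, `H'` are the two connected components (halfspaces) of `G` deprived
of the edges in `C`. -/
def IsHalfspacePair (G : SimpleGraph V) (C : Set (Sym2 V)) (H H' : Set V) : Prop :=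
  H.Nonempty ∧ H'.Nonempty ∧ Disjoint H H' ∧ H ∪ H' = Set.univ ∧
  (∀ x ∈ H, ∀ y ∈ H, (G.deleteEdges C).Reachable x y) ∧
  (∀ x ∈ H', ∀ y ∈ H', (G.deleteEdges C).Reachable x y) ∧
  (∀ x ∈ H, ∀ y ∈ H', ¬ (G.deleteEdges C).Reachable x y)

/-- The boundary of a halfspace `H` of the Θ-class `C` : vertices of `H`
incident to an edge of `C`. -/
def boundarySet (G : SimpleGraph V) (C : Set (Sym2 V)) (H : Set V) : Set V :=
  {x | x ∈ H ∧ ∃ y, G.Adj x y ∧ s(x, y) ∈ C}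

/-- Orthogonality of Θ-classes: there is a common square using both. -/
def Orthogonal (G : SimpleGraph V) (C₁ C₂ : Set (Sym2 V)) : Prop :=
  ∃ u v x y : V, IsSquare G u v x y ∧
    s(u, v) ∈ C₁ ∧ s(x, y) ∈ C₁ ∧ s(u, x) ∈ C₂ ∧ s(v, y) ∈ C₂

/-- A pairwise orthogonal family (POF) of Θ-classes. -/
def IsPOF (G : SimpleGraph V) (X : Set (Set (Sym2 V))) : Prop :=
  (∀ C ∈ X, ThetaClass G C) ∧
  ∀ C ∈ X, ∀ C' ∈ X, C ≠ C' → Orthogonal G C C'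

/-- The `k`-dimensional hypercube graph, on subsets of `{1,…,k}`;
two subsets are adjacent iff their symmetric difference has one element. -/
def cubeGraph (k : ℕ) : SimpleGraph (Finset (Fin k)) where
  Adj A B := (symmDiff A B).card = 1
  symm := by
    constructor
    intro A B h
    rwa [symmDiff_comm] at h
  loopless := by
    constructor
    intro A h
    simp [symmDiff_self] at h

/-- `S` induces a hypercube of dimension `k` in `G`. -/
def IsCubeDim (G : SimpleGraph V) (S : Set V) (k : ℕ) : Prop :=
  Nonempty ((G.induce S) ≃g cubeGraph k)

/-- `S` induces a hypercube in `G`. -/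
def IsInducedCube (G : SimpleGraph V) (S : Set V) : Prop :=
  ∃ k, IsCubeDim G S k

/-- The dimension of `G` is `d`: the largest dimension of an induced hypercube. -/
def GraphDim (G : SimpleGraph V) (d : ℕ) : Prop :=
  (∃ S : Set V, IsCubeDim G S d) ∧ ∀ (S : Set V) (k : ℕ), IsCubeDim G S k → k ≤ d

/-- The Θ-classes of the edges of the induced subgraph on `S`. -/
def cubeClasses (G : SimpleGraph V) (S : Set V) : Set (Set (Sym2 V)) :=
  {C | ThetaClass G C ∧ ∃ x ∈ S, ∃ y ∈ S, G.Adj x y ∧ s(x, y) ∈ C}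

/-- With the `v₀`-orientation, `b ∈ S` is the basis of `S`: all edges of `S`
incident to `b` are outgoing from `b`. -/
def IsBasis (G : SimpleGraph V) (v₀ : V) (S : Set V) (b : V) : Prop :=
  b ∈ S ∧ ∀ w ∈ S, G.Adj b w → G.dist v₀ b < G.dist v₀ w

/-- With the `v₀`-orientation, `b ∈ S` is the anti-basis of `S`: all edges of `S`
incident to `b` are ingoing to `b`. -/
def IsAntiBasis (G : SimpleGraph V) (v₀ : V) (S : Set V) (b : V) : Prop :=
  b ∈ S ∧ ∀ w ∈ S, G.Adj b w → G.dist v₀ w < G.dist v₀ b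

/-- `ℰ⁻(v)` : the Θ-classes containing at least one edge ingoing to `v`. -/
def inClasses (G : SimpleGraph V) (v₀ v : V) : Set (Set (Sym2 V)) :=
  {C | ThetaClass G C ∧ ∃ u, G.Adj u v ∧ G.dist v₀ u < G.dist v₀ v ∧ s(u, v) ∈ C}

/-- The ladder set `L_{u,v}`: classes of the signature `σ_{u,v}` having an
edge incident to `u`. -/
def ladder (G : SimpleGraph V) (u v : V) : Set (Set (Sym2 V)) :=
  {C | C ∈ signature G u v ∧ ∃ w, G.Adj u w ∧ s(u, w) ∈ C}

/-- A POF each of whose classes has an edge outgoing from `u`. -/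
def OutgoingPOF (G : SimpleGraph V) (v₀ u : V) (L : Set (Set (Sym2 V))) : Prop :=
  IsPOF G L ∧ ∀ C ∈ L, ∃ w, G.Adj u w ∧ G.dist v₀ u < G.dist v₀ w ∧ s(u, w) ∈ C

/-- A POF each of whose classes has an edge ingoing to `u`. -/
def IngoingPOF (G : SimpleGraph V) (v₀ u : V) (X : Set (Set (Sym2 V))) : Prop :=
  IsPOF G X ∧ ∀ C ∈ X, ∃ w, G.Adj w u ∧ G.dist v₀ w < G.dist v₀ u ∧ s(w, u) ∈ C

/-- `m` is a median of the triple `x, y, z`. -/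
def IsMedian (G : SimpleGraph V) (x y z m : V) : Prop :=
  m ∈ interval G x y ∧ m ∈ interval G y z ∧ m ∈ interval G z x

/-- `b` is the milestone following `a` on the way to `v`: `b` is the anti-basis of
the induced hypercube with basis `a` whose Θ-classes are the ladder set `L_{a,v}`. -/
def NextMilestone (G : SimpleGraph V) (v₀ v a b : V) : Prop :=
  ∃ S : Set V, IsInducedCube G S ∧ IsBasis G v₀ S a ∧ IsAntiBasis G v₀ S b ∧
    cubeClasses G S = ladder G a v

/-- The milestone set `Π(u,v)`: vertices obtained from `u` by iterating the
next-milestone step towards `v`. -/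
def MilestoneSet (G : SimpleGraph V) (v₀ u v : V) : Set V :=
  {p | Relation.ReflTransGen (fun a b => NextMilestone G v₀ v a b) u p}

/-- The penultimate milestone `π̄(u,v)`: the milestone of `Π(u,v)` other than `v`
closest to `v`, i.e. whose next milestone is `v` itself. -/
def IsPenultimate (G : SimpleGraph V) (v₀ u v p : V) : Prop :=
  p ∈ MilestoneSet G v₀ u v ∧ p ≠ v ∧ NextMilestone G v₀ v p v

/-- A convex set of vertices. -/
def ConvexSet (G : SimpleGraph V) (H : Set V) : Prop :=
  ∀ u ∈ H, ∀ v ∈ H, interval G u v ⊆ H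

/-- A gated set of vertices: each vertex has a gate in `H`. -/
def GatedSet (G : SimpleGraph V) (H : Set V) : Prop :=
  ∀ x : V, ∃ g ∈ H, ∀ h ∈ H, g ∈ interval G x h

/-!
The Θ-class of an edge `mw` of a median graph is exactly the cut between the vertices closer to
`m` and those closer to `w`. Hence the ladder set `L_{m,v}` consists of the classes of the edges
`mw` with `w ∈ I(m,v)`; when `m ∈ I(v₀,v)` these edges are outgoing, and any two of them span a
square by the quadrangle condition, so `L_{m,v}` is an outgoing POF. If `m ∈ I(u,v)`, the ladder
sets `L_{m,u}` and `L_{m,v}` are disjoint, since an edge `mw` in both would give the shortcut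
`u → w → v`. Conversely, if they are disjoint then `m ∈ I(u,v)`: otherwise the first edge from `m`
towards the median of `u, v, m` would lie in both. So the pairs `u, v` with median `m(u,v,v₀) = m`
correspond to pairs of disjoint outgoing POFs realised as ladder sets, with
`d(u,v) = d(m,u) + d(m,v)`.
-/

open SimpleGraph

def thetaClassOf (G : SimpleGraph V) (e : Sym2 V) : Set (Sym2 V) := {f | Theta G e f}

section Theta
variable {G : SimpleGraph V}

lemma IsSquare.symm {u v x y : V} (h : IsSquare G u v x y) : IsSquare G x y u v :=
  ⟨h.2.1, h.1, h.2.2.1.symm, h.2.2.2.1.symm, h.2.2.2.2.2.symm, h.2.2.2.2.1.symm⟩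

lemma IsSquare.swap {u v x y : V} (h : IsSquare G u v x y) : IsSquare G v u y x :=
  ⟨h.1.symm, h.2.1.symm, h.2.2.2.1, h.2.2.1, h.2.2.2.2.2, h.2.2.2.2.1⟩

lemma IsSquare.transpose {u v x y : V} (h : IsSquare G u v x y) : IsSquare G u x v y :=
  ⟨h.2.2.1, h.2.2.2.1, h.1, h.2.1, h.2.2.2.2.1, h.2.2.2.2.2.symm⟩

instance : Std.Symm (Theta0 G) :=
  ⟨fun _ _ ⟨u, v, x, y, hsq, he, hf⟩ => ⟨x, y, u, v, hsq.symm, hf, he⟩⟩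

lemma Theta.symm {e f : Sym2 V} (h : Theta G e f) : Theta G f e :=
  ⟨h.2.1, h.1, Std.Symm.symm _ _ h.2.2⟩

lemma Theta.trans {e f g : Sym2 V} (h : Theta G e f) (h' : Theta G f g) : Theta G e g :=
  ⟨h.1, h'.2.1, h.2.2.trans h'.2.2⟩

lemma ThetaClass.eq_thetaClassOf {C : Set (Sym2 V)} (hC : ThetaClass G C) {e : Sym2 V}
    (he : e ∈ C) : C = thetaClassOf G e := by
  obtain ⟨e₀, -, rfl⟩ := hC
  ext f
  exact ⟨fun h => Theta.trans he.symm h, fun h => Theta.trans he h⟩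

lemma thetaClass_thetaClassOf {a b : V} (hab : G.Adj a b) :
    ThetaClass G (thetaClassOf G s(a, b)) :=
  ⟨s(a, b), hab, rfl⟩

lemma mem_thetaClassOf_self {a b : V} (hab : G.Adj a b) : s(a, b) ∈ thetaClassOf G s(a, b) :=
  ⟨hab, hab, .refl⟩

lemma IsSquare.mem_thetaClassOf {u v x y : V} (h : IsSquare G u v x y) :
    s(x, y) ∈ thetaClassOf G s(u, v) :=
  ⟨h.1, h.2.1, .single ⟨u, v, x, y, h, rfl, rfl⟩⟩

lemma IsSquare.orthogonal {u v x y : V} (h : IsSquare G u v x y) :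
    Orthogonal G (thetaClassOf G s(u, v)) (thetaClassOf G s(u, x)) :=
  ⟨u, v, x, y, h, mem_thetaClassOf_self h.1, h.mem_thetaClassOf,
    mem_thetaClassOf_self h.2.2.1, h.transpose.mem_thetaClassOf⟩

end Theta

lemma mem_interval_comm {G : SimpleGraph V} {u v m : V} :
    m ∈ interval G u v ↔ m ∈ interval G v u := by
  change _ + _ = _ ↔ _ + _ = _
  simp only [SimpleGraph.dist_comm]
  omega

lemma _root_.SimpleGraph.Connected.exists_adj_dist_eq {G : SimpleGraph V} (hG : G.Connected)
    {u v : V} {n : ℕ} (h : G.dist u v = n + 1) : ∃ w, G.Adj u w ∧ G.dist w v = n := by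
  obtain ⟨p, hp⟩ := hG.exists_walk_length_eq_dist u v
  cases p with
  | nil => rw [Walk.length_nil] at hp; omega
  | @cons _ w _ huw q =>
    refine ⟨w, huw, le_antisymm (by have := dist_le q; rw [Walk.length_cons] at hp; omega) ?_⟩
    have := hG.dist_triangle (u := u) (v := w) (w := v)
    rw [dist_eq_one_iff_adj.2 huw] at this
    omega

namespace MedianGraph
variable {G : SimpleGraph V} (hmed : MedianGraph G)
include hmed

lemma dist_add_one_of_adj {x y : V} (hxy : G.Adj x y) (z : V) :
    G.dist z y = G.dist z x + 1 ∨ G.dist z x = G.dist z y + 1 := by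
  obtain ⟨m, ⟨hxmy, hymz, hzmx⟩, -⟩ := hmed.2 x y z
  change G.dist x m + G.dist m y = G.dist x y at hxmy
  change G.dist y m + G.dist m z = G.dist y z at hymz
  change G.dist z m + G.dist m x = G.dist z x at hzmx
  have hxy1 := dist_eq_one_iff_adj.2 hxy
  rcases Nat.eq_zero_or_pos (G.dist x m) with h | h
  · obtain rfl := hmed.1.dist_eq_zero_iff.1 h
    left; simp only [SimpleGraph.dist_comm] at *; omega
  · obtain rfl := hmed.1.dist_eq_zero_iff.1 (show G.dist m y = 0 by omega)
    right; simp only [SimpleGraph.dist_comm] at *; omega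

lemma dist_ne_of_adj {x y : V} (hxy : G.Adj x y) (z : V) : G.dist z x ≠ G.dist z y := by
  rcases hmed.dist_add_one_of_adj hxy z with h | h <;> omega

lemma not_adj_of_adj_of_adj {x y z : V} (hxy : G.Adj x y) (hyz : G.Adj y z) : ¬ G.Adj x z :=
  fun hxz => hmed.dist_ne_of_adj hyz x
    ((dist_eq_one_iff_adj.2 hxy).trans (dist_eq_one_iff_adj.2 hxz).symm)

lemma dist_eq_two_of_adj_of_adj {x y z : V} (hxy : G.Adj x y) (hyz : G.Adj y z) (hxz : x ≠ z) :
    G.dist x z = 2 := by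
  have htri := hmed.1.dist_triangle (u := x) (v := y) (w := z)
  have h0 : G.dist x z ≠ 0 := fun h => hxz (hmed.1.dist_eq_zero_iff.1 h)
  have h1 : G.dist x z ≠ 1 := fun h =>
    hmed.not_adj_of_adj_of_adj hxy hyz (dist_eq_one_iff_adj.1 h)
  rw [dist_eq_one_iff_adj.2 hxy, dist_eq_one_iff_adj.2 hyz] at htri
  omega

lemma mem_interval_of_adj_of_adj {x y z : V} (hxy : G.Adj x y) (hyz : G.Adj y z) (hxz : x ≠ z) :
    y ∈ interval G x z := by
  change _ + _ = _
  rw [dist_eq_one_iff_adj.2 hxy, dist_eq_one_iff_adj.2 hyz,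
    hmed.dist_eq_two_of_adj_of_adj hxy hyz hxz]

lemma quadrangle {u m w w' : V} (hw : G.Adj m w) (hw' : G.Adj m w') (hne : w ≠ w')
    (hd : G.dist u w + 1 = G.dist u m) (hd' : G.dist u w' + 1 = G.dist u m) :
    ∃ t, G.Adj w t ∧ G.Adj w' t ∧ G.dist u t + 2 = G.dist u m := by
  have hww' := hmed.dist_eq_two_of_adj_of_adj hw.symm hw' hne
  obtain ⟨t, ⟨hwtw', hw'tu, hutw⟩, -⟩ := hmed.2 w w' u
  change G.dist w t + G.dist t w' = G.dist w w' at hwtw'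
  change G.dist w' t + G.dist t u = G.dist w' u at hw'tu
  change G.dist u t + G.dist t w = G.dist u w at hutw
  have hwt : G.dist w t = 1 := by simp only [SimpleGraph.dist_comm] at *; omega
  have hw't : G.dist w' t = 1 := by simp only [SimpleGraph.dist_comm] at *; omega
  exact ⟨t, dist_eq_one_iff_adj.1 hwt, dist_eq_one_iff_adj.1 hw't,
    by simp only [SimpleGraph.dist_comm] at *; omega⟩

lemma eq_of_three_common_neighbors {u y a b c : V} (hab : a ≠ b) (hbc : b ≠ c) (hca : c ≠ a)
    (hua : G.Adj u a) (hub : G.Adj u b) (huc : G.Adj u c)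
    (hay : G.Adj a y) (hby : G.Adj b y) (hcy : G.Adj c y) : u = y := by
  obtain ⟨m, -, huniq⟩ := hmed.2 a b c
  have hu := huniq u ⟨hmed.mem_interval_of_adj_of_adj hua.symm hub hab,
    hmed.mem_interval_of_adj_of_adj hub.symm huc hbc,
    hmed.mem_interval_of_adj_of_adj huc.symm hua hca⟩
  have hy := huniq y ⟨hmed.mem_interval_of_adj_of_adj hay hby.symm hab,
    hmed.mem_interval_of_adj_of_adj hby hcy.symm hbc,
    hmed.mem_interval_of_adj_of_adj hcy hay.symm hca⟩
  exact hu.trans hy.symm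

lemma dist_lt_of_isSquare {u v x y z : V} (hsq : IsSquare G u v x y)
    (h : G.dist z u < G.dist z v) : G.dist z x < G.dist z y := by
  obtain ⟨huv, hxy, hux, hvy, huy, hvx⟩ := hsq
  have hv : G.dist z v = G.dist z u + 1 := by
    rcases hmed.dist_add_one_of_adj huv z with h' | h' <;> omega
  by_contra hge
  have hx : G.dist z x = G.dist z y + 1 := by
    rcases hmed.dist_add_one_of_adj hxy z with h' | h' <;> omega
  rcases hmed.dist_add_one_of_adj hux z with hxu | hxu
  · -- `v` and `x` are common neighbours of `u` and `y`; a third one lies closer to `z`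
    obtain ⟨t, hut, hyt, hzt⟩ := hmed.quadrangle (u := z) huv.symm hvy huy (by omega) (by omega)
    refine huy (hmed.eq_of_three_common_neighbors hvx ?_ ?_ huv hux hut hvy hxy hyt.symm)
    · rintro rfl; omega
    · rintro rfl; omega
  · have := hmed.dist_add_one_of_adj hvy z
    omega

lemma dist_lt_iff_of_isSquare {u v x y : V} (hsq : IsSquare G u v x y) (z : V) :
    G.dist z u < G.dist z v ↔ G.dist z x < G.dist z y :=
  ⟨hmed.dist_lt_of_isSquare hsq, hmed.dist_lt_of_isSquare hsq.symm⟩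

lemma exists_dist_lt_iff_of_reflTransGen {a b : V} {f : Sym2 V}
    (h : Relation.ReflTransGen (Theta0 G) s(a, b) f) :
    ∃ x y, f = s(x, y) ∧ ∀ z, (G.dist z a < G.dist z b ↔ G.dist z x < G.dist z y) := by
  induction h with
  | refl => exact ⟨a, b, rfl, fun _ => Iff.rfl⟩
  | tail _ hstep ih =>
    obtain ⟨x, y, rfl, hxy⟩ := ih
    obtain ⟨u, v, p, q, hsq, he, rfl⟩ := hstep
    rcases Sym2.eq_iff.1 he with ⟨rfl, rfl⟩ | ⟨rfl, rfl⟩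
    · exact ⟨p, q, rfl, fun z => (hxy z).trans (hmed.dist_lt_iff_of_isSquare hsq z)⟩
    · exact ⟨q, p, Sym2.eq_swap, fun z => (hxy z).trans (hmed.dist_lt_iff_of_isSquare hsq.swap z)⟩

lemma notMem_thetaClassOf_of_dist_lt {a b x y : V} (hx : G.dist x a < G.dist x b)
    (hy : G.dist y a < G.dist y b) : s(x, y) ∉ thetaClassOf G s(a, b) := by
  intro hxy
  obtain ⟨x', y', he, hside⟩ := hmed.exists_dist_lt_iff_of_reflTransGen hxy.2.2
  have hy' : G.dist y' a < G.dist y' b := by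
    rcases Sym2.eq_iff.1 he with ⟨-, rfl⟩ | ⟨rfl, -⟩ <;> assumption
  have := (hside y').1 hy'
  simp at this

lemma exists_theta0_of_dist_eq_succ {a b p q : V} (hab : G.Adj a b) (hpq : G.Adj p q) {n : ℕ}
    (hpa : G.dist p a = n + 1) (hp : G.dist p a < G.dist p b) (hq : G.dist q b < G.dist q a) :
    ∃ p' q', G.Adj p' q' ∧ G.dist p' a = n ∧ G.dist p' a < G.dist p' b ∧
      G.dist q' b < G.dist q' a ∧ Theta0 G s(p', q') s(p, q) := by
  have hpb : G.dist p b = n + 2 := by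
    rcases hmed.dist_add_one_of_adj hab p with h | h <;> omega
  have hqab := hmed.dist_add_one_of_adj hpq a
  have hqbb := hmed.dist_add_one_of_adj hpq b
  have hqa : G.dist q a = n + 2 := by simp only [SimpleGraph.dist_comm] at *; omega
  have hqb : G.dist q b = n + 1 := by simp only [SimpleGraph.dist_comm] at *; omega
  obtain ⟨p₂, hpp₂, hp₂a⟩ := hmed.1.exists_adj_dist_eq hpa
  have hp₂b : G.dist p₂ b = n + 1 := by
    have h1 := hmed.dist_add_one_of_adj hab p₂
    have h2 := hmed.dist_add_one_of_adj hpp₂ b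
    simp only [SimpleGraph.dist_comm] at *; omega
  obtain ⟨t, hqt, hp₂t, htb⟩ := hmed.quadrangle (u := b) hpq hpp₂ (by rintro rfl; omega)
    (by simp only [SimpleGraph.dist_comm] at *; omega)
    (by simp only [SimpleGraph.dist_comm] at *; omega)
  have hta : G.dist t a = n + 1 := by
    have h1 := hmed.dist_add_one_of_adj hp₂t a
    have h2 := hmed.dist_add_one_of_adj hqt a
    simp only [SimpleGraph.dist_comm] at *; omega
  have htb' : G.dist t b = n := by simp only [SimpleGraph.dist_comm] at *; omega
  refine ⟨p₂, t, hp₂t, hp₂a, by omega, by omega,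
    ⟨p₂, t, p, q, ⟨hp₂t, hpq, hpp₂.symm, hqt.symm, ?_, ?_⟩, rfl, rfl⟩⟩
  · rintro rfl; omega
  · rintro rfl; omega

lemma mem_thetaClassOf_of_dist_lt {a b p q : V} (hab : G.Adj a b) (hpq : G.Adj p q)
    (hp : G.dist p a < G.dist p b) (hq : G.dist q b < G.dist q a) :
    s(p, q) ∈ thetaClassOf G s(a, b) := by
  refine ⟨hab, hpq, ?_⟩
  generalize hn : G.dist p a = n at hp
  induction n generalizing p q with
  | zero =>
    obtain rfl := hmed.1.dist_eq_zero_iff.1 hn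
    have hqb : G.dist q b = 0 := by have := dist_eq_one_iff_adj.2 hpq.symm; omega
    obtain rfl := hmed.1.dist_eq_zero_iff.1 hqb
    exact .refl
  | succ n ih =>
    obtain ⟨p', q', hpq', hn', hp', hq', hstep⟩ :=
      hmed.exists_theta0_of_dist_eq_succ hab hpq hn (hn ▸ hp) hq
    exact (ih hpq' hq' hn' (hn' ▸ hp')).tail hstep

lemma dist_lt_of_reachable_deleteEdges {a b u v : V} (hab : G.Adj a b)
    (h : (G.deleteEdges (thetaClassOf G s(a, b))).Reachable u v)
    (hu : G.dist u a < G.dist u b) : G.dist v a < G.dist v b := by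
  obtain ⟨p⟩ := h
  induction p with
  | nil => exact hu
  | @cons x y _ hadj _ ih =>
    obtain ⟨hxy, hnot⟩ := deleteEdges_adj.1 hadj
    refine ih ?_
    by_contra hy
    have := hmed.dist_ne_of_adj hab y
    exact hnot (hmed.mem_thetaClassOf_of_dist_lt hab hxy hu (by omega))

lemma reachable_deleteEdges_of_dist_lt {a b u : V}
    (hu : G.dist u a < G.dist u b) : (G.deleteEdges (thetaClassOf G s(a, b))).Reachable u a := by
  generalize hn : G.dist u a = n at hu
  induction n generalizing u with
  | zero => rw [hmed.1.dist_eq_zero_iff.1 hn]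
  | succ n ih =>
    obtain ⟨u', huu', hu'a⟩ := hmed.1.exists_adj_dist_eq hn
    have hu' : G.dist u' a < G.dist u' b := by
      have := hmed.dist_add_one_of_adj huu' b
      simp only [SimpleGraph.dist_comm] at *; omega
    have hstep : (G.deleteEdges (thetaClassOf G s(a, b))).Adj u u' :=
      deleteEdges_adj.2 ⟨huu', hmed.notMem_thetaClassOf_of_dist_lt (hn ▸ hu) hu'⟩
    exact hstep.reachable.trans (ih hu'a (hu'a ▸ hu'))

theorem separates_thetaClassOf_iff {m w : V} (hmw : G.Adj m w) (u : V) :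
    Separates G (thetaClassOf G s(m, w)) m u ↔ G.dist u w < G.dist u m := by
  have hm : G.dist m m < G.dist m w := by simp [dist_eq_one_iff_adj.2 hmw]
  refine ⟨fun hsep => ?_, fun hu hreach => ?_⟩
  · by_contra hu
    have := hmed.dist_ne_of_adj hmw u
    exact hsep (hmed.reachable_deleteEdges_of_dist_lt (by omega)).symm
  · have := hmed.dist_lt_of_reachable_deleteEdges hmw hreach hm
    omega

theorem mem_ladder_iff {m u : V} {C : Set (Sym2 V)} :
    C ∈ ladder G m u ↔ ∃ w, G.Adj m w ∧ G.dist u w < G.dist u m ∧ C = thetaClassOf G s(m, w) := by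
  constructor
  · rintro ⟨⟨hC, hsep⟩, w, hmw, hw⟩
    obtain rfl := hC.eq_thetaClassOf hw
    exact ⟨w, hmw, (hmed.separates_thetaClassOf_iff hmw u).1 hsep, rfl⟩
  · rintro ⟨w, hmw, hw, rfl⟩
    exact ⟨⟨thetaClass_thetaClassOf hmw, (hmed.separates_thetaClassOf_iff hmw u).2 hw⟩,
      w, hmw, mem_thetaClassOf_self hmw⟩

theorem ladder_inter_ladder_eq_empty {m u v : V} (h : m ∈ interval G u v) :
    ladder G m u ∩ ladder G m v = ∅ := by
  refine Set.eq_empty_iff_forall_notMem.2 fun C ⟨hu, hv⟩ => ?_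
  obtain ⟨w, hmw, hwu, rfl⟩ := hmed.mem_ladder_iff.1 hu
  have hwv := (hmed.separates_thetaClassOf_iff hmw v).1 hv.1.2
  change G.dist u m + G.dist m v = G.dist u v at h
  have := hmed.1.dist_triangle (u := u) (v := w) (w := v)
  simp only [SimpleGraph.dist_comm] at *
  omega

theorem mem_interval_of_ladder_inter_ladder_eq_empty {m u v : V}
    (h : ladder G m u ∩ ladder G m v = ∅) : m ∈ interval G u v := by
  obtain ⟨g, ⟨hg, hvgm, hmgu⟩, -⟩ := hmed.2 u v m
  obtain rfl | hgm := eq_or_ne g m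
  · exact hg
  change G.dist v g + G.dist g m = G.dist v m at hvgm
  change G.dist m g + G.dist g u = G.dist m u at hmgu
  obtain ⟨n, hn⟩ := Nat.exists_eq_succ_of_ne_zero (mt hmed.1.dist_eq_zero_iff.1 hgm.symm)
  obtain ⟨w, hmw, hwg⟩ := hmed.1.exists_adj_dist_eq hn
  -- `w` lies on geodesics from `m` to `g`, hence to both `u` and `v`
  have hu : G.dist u w < G.dist u m := by
    have := hmed.1.dist_triangle (u := u) (v := g) (w := w)
    simp only [SimpleGraph.dist_comm] at *; omega
  have hv : G.dist v w < G.dist v m := by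
    have := hmed.1.dist_triangle (u := v) (v := g) (w := w)
    simp only [SimpleGraph.dist_comm] at *; omega
  exact absurd h (Set.nonempty_iff_ne_empty.1
    ⟨_, hmed.mem_ladder_iff.2 ⟨w, hmw, hu, rfl⟩, hmed.mem_ladder_iff.2 ⟨w, hmw, hv, rfl⟩⟩)

theorem outgoingPOF_ladder {v₀ m u : V} (h : m ∈ interval G v₀ u) :
    OutgoingPOF G v₀ m (ladder G m u) := by
  refine ⟨⟨fun C hC => hC.1.1, fun C hC C' hC' hne => ?_⟩, fun C hC => ?_⟩
  · obtain ⟨w, hmw, hwu, rfl⟩ := hmed.mem_ladder_iff.1 hC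
    obtain ⟨w', hmw', hw'u, rfl⟩ := hmed.mem_ladder_iff.1 hC'
    have hww' : w ≠ w' := by rintro rfl; exact hne rfl
    have hwu' := hmed.dist_add_one_of_adj hmw u
    have hw'u' := hmed.dist_add_one_of_adj hmw' u
    obtain ⟨t, hwt, hw't, hut⟩ := hmed.quadrangle (u := u) hmw hmw' hww' (by omega) (by omega)
    have hmt : m ≠ t := by rintro rfl; omega
    exact IsSquare.orthogonal ⟨hmw, hw't, hmw', hwt, hmt, hww'⟩
  · obtain ⟨w, hmw, hwu, rfl⟩ := hmed.mem_ladder_iff.1 hC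
    refine ⟨w, hmw, ?_, mem_thetaClassOf_self hmw⟩
    -- an edge `mw` pointing towards `v₀` would shorten the geodesic `v₀ → m → u`
    change G.dist v₀ m + G.dist m u = G.dist v₀ u at h
    have hcases := hmed.dist_add_one_of_adj hmw v₀
    have htri := hmed.1.dist_triangle (u := v₀) (v := w) (w := u)
    have hwu' := hmed.dist_add_one_of_adj hmw u
    simp only [SimpleGraph.dist_comm] at *
    omega

end MedianGraph

lemma isGreatest_of_forall_exists_le {α : Type*} [PartialOrder α] {S T : Set α} {a : α}
    (hST : ∀ s ∈ S, ∃ t ∈ T, s ≤ t) (hTS : ∀ t ∈ T, ∃ s ∈ S, t ≤ s) (h : IsGreatest S a) :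
    IsGreatest T a := by
  have hub : a ∈ upperBounds T := fun t ht =>
    let ⟨s, hs, hts⟩ := hTS t ht
    hts.trans (h.2 hs)
  obtain ⟨t, ht, hat⟩ := hST a h.1
  exact ⟨le_antisymm (hub ht) hat ▸ ht, hub⟩

section Realisation
variable {G : SimpleGraph V} (hmed : MedianGraph G) {v₀ : V} {φ : V → Set (Set (Sym2 V)) → ℕ}
  (hφ : ∀ m L, OutgoingPOF G v₀ m L →
    IsGreatest {n | ∃ v, m ∈ interval G v₀ v ∧ ladder G m v = L ∧ n = G.dist m v} (φ m L))
include hmed hφ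

theorem exists_isMedian_dist_eq {m : V} {L Lstar : Set (Set (Sym2 V))}
    (hL : OutgoingPOF G v₀ m L) (hLstar : OutgoingPOF G v₀ m Lstar) (hdisj : L ∩ Lstar = ∅) :
    ∃ u v, IsMedian G u v v₀ m ∧ G.dist u v = φ m L + φ m Lstar := by
  obtain ⟨u, hmu, rfl, hφu⟩ := (hφ m L hL).1
  obtain ⟨v, hmv, rfl, hφv⟩ := (hφ m _ hLstar).1
  have hm := hmed.mem_interval_of_ladder_inter_ladder_eq_empty hdisj
  refine ⟨u, v, ⟨hm, mem_interval_comm.1 hmv, hmu⟩, ?_⟩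
  change G.dist u m + G.dist m v = G.dist u v at hm
  rw [hφu, hφv, ← hm, SimpleGraph.dist_comm]

theorem exists_outgoingPOF_dist_le {u v m : V} (hm : IsMedian G u v v₀ m) :
    ∃ L Lstar, OutgoingPOF G v₀ m L ∧ OutgoingPOF G v₀ m Lstar ∧
      L ∩ Lstar = ∅ ∧ G.dist u v ≤ φ m L + φ m Lstar := by
  obtain ⟨huv, hvv₀, hv₀u⟩ := hm
  have hv₀v := mem_interval_comm.1 hvv₀
  have hLu := hmed.outgoingPOF_ladder hv₀u
  have hLv := hmed.outgoingPOF_ladder hv₀v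
  refine ⟨_, _, hLu, hLv, hmed.ladder_inter_ladder_eq_empty huv, ?_⟩
  have hu := (hφ m _ hLu).2 ⟨u, hv₀u, rfl, rfl⟩
  have hv := (hφ m _ hLv).2 ⟨v, hv₀v, rfl, rfl⟩
  change G.dist u m + G.dist m v = G.dist u v at huv
  rw [← huv, SimpleGraph.dist_comm]
  exact add_le_add hu hv

end Realisation

theorem diameter_via_disjoint_pofs_general {V : Type*} (G : SimpleGraph V)
    (hmed : MedianGraph G) (v₀ : V)
    (φ : V → Set (Set (Sym2 V)) → ℕ)
    (hφ : ∀ m L, OutgoingPOF G v₀ m L →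
      IsGreatest {n | ∃ v, m ∈ interval G v₀ v ∧ ladder G m v = L ∧
        n = G.dist m v} (φ m L)) :
    (∀ m Υ, IsGreatest {n | ∃ u v, IsMedian G u v v₀ m ∧ n = G.dist u v} Υ →
      IsGreatest {n | ∃ L Lstar, OutgoingPOF G v₀ m L ∧ OutgoingPOF G v₀ m Lstar ∧
        L ∩ Lstar = ∅ ∧ n = φ m L + φ m Lstar} Υ) ∧
    (∀ D, IsGreatest {n | ∃ u v : V, n = G.dist u v} D →
      IsGreatest {n | ∃ m L Lstar, OutgoingPOF G v₀ m L ∧ OutgoingPOF G v₀ m Lstar ∧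
        L ∩ Lstar = ∅ ∧ n = φ m L + φ m Lstar} D) := by
  refine ⟨fun m Υ => isGreatest_of_forall_exists_le ?_ ?_,
    fun D => isGreatest_of_forall_exists_le ?_ ?_⟩
  · rintro _ ⟨u, v, hm, rfl⟩
    obtain ⟨L, Lstar, hL, hLstar, hdisj, hle⟩ := exists_outgoingPOF_dist_le hmed hφ hm
    exact ⟨_, ⟨L, Lstar, hL, hLstar, hdisj, rfl⟩, hle⟩
  · rintro _ ⟨L, Lstar, hL, hLstar, hdisj, rfl⟩
    obtain ⟨u, v, hm, heq⟩ := exists_isMedian_dist_eq hmed hφ hL hLstar hdisj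
    exact ⟨_, ⟨u, v, hm, rfl⟩, heq.ge⟩
  · rintro _ ⟨u, v, rfl⟩
    obtain ⟨m, hm, -⟩ := hmed.2 u v v₀
    obtain ⟨L, Lstar, hL, hLstar, hdisj, hle⟩ := exists_outgoingPOF_dist_le hmed hφ hm
    exact ⟨_, ⟨m, L, Lstar, hL, hLstar, hdisj, rfl⟩, hle⟩
  · rintro _ ⟨m, L, Lstar, hL, hLstar, hdisj, rfl⟩
    obtain ⟨u, v, -, heq⟩ := exists_isMedian_dist_eq hmed hφ hL hLstar hdisj
    exact ⟨_, ⟨u, v, rfl⟩, heq.ge⟩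

/-- In a median graph with basepoint `v₀`, for every vertex `m`,
`Υ(m) = max{d(u,v) : m = m(u,v,v₀)}` equals the maximum of
`φ(m,L) + φ(m,L*)` over disjoint POFs `L, L*` outgoing from `m`; consequently
the diameter is the maximum of these quantities over all `m`. -/
theorem diameter_via_disjoint_pofs {V : Type*} [Fintype V] (G : SimpleGraph V)
    (hmed : MedianGraph G) (v₀ : V)
    (φ : V → Set (Set (Sym2 V)) → ℕ)
    (hφ : ∀ m L, OutgoingPOF G v₀ m L →
      IsGreatest {n | ∃ v, m ∈ interval G v₀ v ∧ ladder G m v = L ∧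
        n = G.dist m v} (φ m L)) :
    (∀ m Υ, IsGreatest {n | ∃ u v, IsMedian G u v v₀ m ∧ n = G.dist u v} Υ →
      IsGreatest {n | ∃ L Lstar, OutgoingPOF G v₀ m L ∧ OutgoingPOF G v₀ m Lstar ∧
        L ∩ Lstar = ∅ ∧ n = φ m L + φ m Lstar} Υ) ∧
    (∀ D, IsGreatest {n | ∃ u v : V, n = G.dist u v} D →
      IsGreatest {n | ∃ m L Lstar, OutgoingPOF G v₀ m L ∧ OutgoingPOF G v₀ m Lstar ∧
        L ∩ Lstar = ∅ ∧ n = φ m L + φ m Lstar} D) :=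
  diameter_via_disjoint_pofs_general G hmed v₀ φ hφ

end MedianPaper
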